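/- Compactness of fixed points in PCF: if E[fix x.M] is bounded (evaluates to a canonical form) for an eliminative context E, then there exists n ≥ 0 such that E[fixⁿ x.M] is bounded, where fix⁰ x.M = fix x.x and fix^{n+1} x.M = M[fixⁿ x.M / x]. -/

import Mathlib

set_option linter.unusedVariables false
namespace PCFc

/-- The arithmetic operations of PCF. -/
inductive Op | add | mul | sub | div | mod
deriving DecidableEq

def Op.den : Op → ℕ → ℕ → ℕ
  | .add, a, b => a + b
  | .mul, a, b => a * b
  | .sub, a, b => a - b
  | .div, a, b => a / b
  | .mod, a, b => a % b

/-- Types of PCFc: natural numbers, costs, products and functions. -/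
inductive Ty
  | nat | cost
  | prod (A B : Ty)
  | arrow (A B : Ty)
deriving DecidableEq

/-- Raw terms of PCFc in de Bruijn representation. `proj true` is the first
projection.  `czero`, `cone`, `cadd` are the cost constructs `0̂`, `1̂`, `⊞`. -/
inductive Tm
  | var : ℕ → Tm
  | num : ℕ → Tm
  | op : Op → Tm → Tm → Tm
  | ifz : Tm → Tm → Tm → Tm
  | pair : Tm → Tm → Tm
  | proj : Bool → Tm → Tm
  | lam : Tm → Tm
  | app : Tm → Tm → Tm
  | fix : Tm → Tm
  | czero : Tm
  | cone : Tm
  | cadd : Tm → Tm → Tm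
deriving DecidableEq

/-- Shift (by one) the de Bruijn variables `≥ c`. -/
def shift (c : ℕ) : Tm → Tm
  | .var n => if n < c then .var n else .var (n + 1)
  | .num n => .num n
  | .op o M N => .op o (shift c M) (shift c N)
  | .ifz M P Q => .ifz (shift c M) (shift c P) (shift c Q)
  | .pair M N => .pair (shift c M) (shift c N)
  | .proj b M => .proj b (shift c M)
  | .lam M => .lam (shift (c + 1) M)
  | .app M N => .app (shift c M) (shift c N)
  | .fix M => .fix (shift (c + 1) M)
  | .czero => .czero
  | .cone => .cone
  | .cadd M N => .cadd (shift c M) (shift c N)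

/-- Capture-avoiding substitution of `s` for the de Bruijn variable `k`. -/
def subst (s : Tm) : ℕ → Tm → Tm
  | k, .var n => if n = k then (shift 0)^[k] s else if k < n then .var (n - 1) else .var n
  | k, .num n => .num n
  | k, .op o M N => .op o (subst s k M) (subst s k N)
  | k, .ifz M P Q => .ifz (subst s k M) (subst s k P) (subst s k Q)
  | k, .pair M N => .pair (subst s k M) (subst s k N)
  | k, .proj b M => .proj b (subst s k M)
  | k, .lam M => .lam (subst s (k + 1) M)
  | k, .app M N => .app (subst s k M) (subst s k N)
  | k, .fix M => .fix (subst s (k + 1) M)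
  | _, .czero => .czero
  | _, .cone => .cone
  | k, .cadd M N => .cadd (subst s k M) (subst s k N)

/-- The cost numeral `⌜n⌝`, the right-associated sum of `n` unit costs. -/
def cnum : ℕ → Tm
  | 0 => .czero
  | n + 1 => .cadd .cone (cnum n)

/-- The `n`-th syntactic unfolding of `fix x. M`:
`fix⁰ x.M = fix x.x` and `fix^{n+1} x.M = M[fixⁿ x.M / x]`. -/
def fixn (M : Tm) : ℕ → Tm
  | 0 => .fix (.var 0)
  | n + 1 => subst (fixn M n) 0 M

/-- Typing judgment `Γ ⊢ M : A` for PCFc (contexts are de Bruijn lists). -/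
inductive HasTy : List Ty → Tm → Ty → Prop
  | var {Γ n A} : Γ[n]? = some A → HasTy Γ (.var n) A
  | num {Γ n} : HasTy Γ (.num n) .nat
  | op {Γ o M N} : HasTy Γ M .nat → HasTy Γ N .nat → HasTy Γ (.op o M N) .nat
  | ifz {Γ M P Q A} : HasTy Γ M .nat → HasTy Γ P A → HasTy Γ Q A →
      HasTy Γ (.ifz M P Q) A
  | pair {Γ M N A B} : HasTy Γ M A → HasTy Γ N B → HasTy Γ (.pair M N) (.prod A B)
  | proj {Γ M A B b} : HasTy Γ M (.prod A B) → HasTy Γ (.proj b M) (cond b A B)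
  | lam {Γ M A B} : HasTy (A :: Γ) M B → HasTy Γ (.lam M) (.arrow A B)
  | app {Γ M N A B} : HasTy Γ M (.arrow A B) → HasTy Γ N A → HasTy Γ (.app M N) B
  | fix {Γ M A} : HasTy (A :: Γ) M A → HasTy Γ (.fix M) A
  | czero {Γ} : HasTy Γ .czero .cost
  | cone {Γ} : HasTy Γ .cone .cost
  | cadd {Γ M N} : HasTy Γ M .cost → HasTy Γ N .cost → HasTy Γ (.cadd M N) .cost

/-- Eliminative contexts `E ::= [] | πᵢ(E) | E M`. -/
inductive ECtx
  | hole
  | proj (b : Bool) (E : ECtx)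
  | app (E : ECtx) (N : Tm)

/-- Filling the hole of an eliminative context. -/
def ECtx.fill : ECtx → Tm → Tm
  | .hole, M => M
  | .proj b E, M => .proj b (E.fill M)
  | .app E N, M => .app (E.fill M) N

/-- The size order `Γ ⊢ M ≤ N : A` of PCFc: a preorder closed under the
monotone contexts (principal positions of eliminations, bodies of
introductions of negative types, operands of arithmetic and cost sums),
containing β-axioms (reduct ≤ redex), the cost axioms (zero) and (assoc),
the rational-chain axiom (rat) and computational induction (cpind). -/
inductive SizeLe : List Ty → Tm → Tm → Ty → Prop
  | refl {Γ M A} : HasTy Γ M A → SizeLe Γ M M A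
  | trans {Γ M N P A} : SizeLe Γ M N A → SizeLe Γ N P A → SizeLe Γ M P A
  -- monotone contexts
  | proj_mono {Γ M M' A B b} : SizeLe Γ M M' (.prod A B) →
      SizeLe Γ (.proj b M) (.proj b M') (cond b A B)
  | app_mono {Γ M M' N A B} : SizeLe Γ M M' (.arrow A B) → HasTy Γ N A →
      SizeLe Γ (.app M N) (.app M' N) B
  | ifz_mono {Γ N N' P Q A} : SizeLe Γ N N' .nat → HasTy Γ P A → HasTy Γ Q A →
      SizeLe Γ (.ifz N P Q) (.ifz N' P Q) A
  | lam_mono {Γ M M' A B} : SizeLe (A :: Γ) M M' B →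
      SizeLe Γ (.lam M) (.lam M') (.arrow A B)
  | pair_mono {Γ M M' N N' A B} : SizeLe Γ M M' A → SizeLe Γ N N' B →
      SizeLe Γ (.pair M N) (.pair M' N') (.prod A B)
  | op_mono {Γ o M M' N N'} : SizeLe Γ M M' .nat → SizeLe Γ N N' .nat →
      SizeLe Γ (.op o M N) (.op o M' N') .nat
  | cadd_mono {Γ M M' N N'} : SizeLe Γ M M' .cost → SizeLe Γ N N' .cost →
      SizeLe Γ (.cadd M N) (.cadd M' N') .cost
  -- β-axioms: reduct ≤ redex
  | beta_app {Γ M N A B} : HasTy (A :: Γ) M B → HasTy Γ N A →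
      SizeLe Γ (subst N 0 M) (.app (.lam M) N) B
  | beta_proj {Γ M₁ M₂ A B b} : HasTy Γ M₁ A → HasTy Γ M₂ B →
      SizeLe Γ (cond b M₁ M₂) (.proj b (.pair M₁ M₂)) (cond b A B)
  | beta_ifz_zero {Γ P Q A} : HasTy Γ P A → HasTy Γ Q A →
      SizeLe Γ P (.ifz (.num 0) P Q) A
  | beta_ifz_succ {Γ P Q A n} : HasTy Γ P A → HasTy Γ Q A →
      SizeLe Γ Q (.ifz (.num (n + 1)) P Q) A
  | beta_op {Γ o a b} : SizeLe Γ (.num (o.den a b)) (.op o (.num a) (.num b)) .nat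
  -- cost axioms
  | czero_unit {Γ M} : HasTy Γ M .cost → SizeLe Γ M (.cadd .czero M) .cost
  | cadd_assoc {Γ L M N} : HasTy Γ L .cost → HasTy Γ M .cost → HasTy Γ N .cost →
      SizeLe Γ (.cadd (.cadd L M) N) (.cadd L (.cadd M N)) .cost
  -- fixed point axioms
  | rat {Γ M A n} : HasTy (A :: Γ) M A →
      SizeLe Γ (fixn M (n + 1)) (fixn M n) A
  | cpind {Γ M E' A B} {E : ECtx} : HasTy (A :: Γ) E' A →
      (∀ n : ℕ, SizeLe Γ M (E.fill (fixn E' n)) B) →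
      SizeLe Γ M (E.fill (.fix E')) B

/-- Canonical cost values and the cost they denote: `0̂` denotes `0`,
`1̂` denotes `1`, and a sum of canonical cost values denotes the sum. -/
inductive CVal : Tm → ℕ → Prop
  | zero : CVal .czero 0
  | one : CVal .cone 1
  | add {V W a b} : CVal V a → CVal W b → CVal (.cadd V W) (a + b)

/-- The (costless) call-by-name big-step semantics `M ⇓ V` of PCFc. -/
inductive Evalc : Tm → Tm → Prop
  | num {n} : Evalc (.num n) (.num n)
  | op {o M N a b} : Evalc M (.num a) → Evalc N (.num b) →
      Evalc (.op o M N) (.num (o.den a b))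
  | ifz_zero {M P Q V} : Evalc M (.num 0) → Evalc P V → Evalc (.ifz M P Q) V
  | ifz_succ {M P Q V k} : Evalc M (.num (k + 1)) → Evalc Q V → Evalc (.ifz M P Q) V
  | pair {M N} : Evalc (.pair M N) (.pair M N)
  | proj {M M₁ M₂ V b} : Evalc M (.pair M₁ M₂) → Evalc (cond b M₁ M₂) V →
      Evalc (.proj b M) V
  | lam {M} : Evalc (.lam M) (.lam M)
  | app {M N B V} : Evalc M (.lam B) → Evalc (subst N 0 B) V → Evalc (.app M N) V
  | fix {M V} : Evalc (subst (.fix M) 0 M) V → Evalc (.fix M) V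
  | czero : Evalc .czero .czero
  | cone : Evalc .cone .cone
  | cadd {M N V W a b} : Evalc M V → CVal V a → Evalc N W → CVal W b →
      Evalc (.cadd M N) (cnum (a + b))

/-- `M` is bounded: it evaluates to some canonical form. -/
def Bounded (M : Tm) : Prop := ∃ V, Evalc M V

end PCFc

namespace PCFc

/-!
Call `M` a `k`-approximation of `N` (`Approx k M N`) if it arises from `N` by replacing fixed
points `fix x.F` by unfoldings `fixⁿ x.F'` with `n ≥ k` and `F'` a `k`-approximation of `F`.
If `N ⇓ V` unfolds `fix` at most `k` times, then every `(k + j)`-approximation of `N` evaluates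
to a `j`-approximation of `V` (`ApproxEval k N V`): each unfolding of `fix x.F` is matched by
`fixⁿ⁺¹ x.F' = F'[fixⁿ x.F' / x]`, which costs one level of depth. As `E[fixᵏ x.M]` is a
`k`-approximation of `E[fix x.M]`, it converges.
-/

theorem shift_var_of_lt {n c : ℕ} (h : n < c) : shift c (.var n) = .var n := by
  simp [shift, h]

theorem shift_var_of_le {n c : ℕ} (h : c ≤ n) : shift c (.var n) = .var (n + 1) := by
  simp [shift, Nat.not_lt.2 h]

theorem subst_var_self (s : Tm) (k : ℕ) : subst s k (.var k) = (shift 0)^[k] s := by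
  simp [subst]

theorem subst_var_of_lt (s : Tm) {n k : ℕ} (h : n < k) : subst s k (.var n) = .var n := by
  simp [subst, h.ne, Nat.not_lt.2 h.le]

theorem subst_var_of_gt (s : Tm) {n k : ℕ} (h : k < n) : subst s k (.var n) = .var (n - 1) := by
  simp [subst, h.ne', h]

theorem shift_shift_of_le (M : Tm) {c d : ℕ} (h : c ≤ d) :
    shift c (shift d M) = shift (d + 1) (shift c M) := by
  induction M generalizing c d with
  | var n =>
    rcases Nat.lt_or_ge n c with h1 | h1
    · rw [shift_var_of_lt (by omega : n < d), shift_var_of_lt h1, shift_var_of_lt (by omega)]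
    rcases Nat.lt_or_ge n d with h2 | h2
    · rw [shift_var_of_lt h2, shift_var_of_le h1, shift_var_of_lt (by omega : n + 1 < d + 1)]
    · rw [shift_var_of_le h2, shift_var_of_le (by omega : c ≤ n + 1), shift_var_of_le h1,
        shift_var_of_le (by omega : d + 1 ≤ n + 1)]
  | lam M ih | fix M ih => simp only [shift, ih (Nat.succ_le_succ h)]
  | _ => simp_all [shift]

theorem shift_iterate_of_le (s : Tm) {c k : ℕ} (h : c ≤ k) :
    shift c ((shift 0)^[k] s) = (shift 0)^[k + 1] s := by
  induction k generalizing c with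
  | zero =>
    obtain rfl : c = 0 := Nat.le_zero.1 h
    rw [Function.iterate_succ_apply']
  | succ k ih =>
    rcases c with _ | c
    · rw [Function.iterate_succ_apply' _ (k + 1)]
    · rw [Function.iterate_succ_apply', ← shift_shift_of_le _ (Nat.zero_le c), ih (by omega),
        ← Function.iterate_succ_apply' (shift 0)]

theorem shift_add_iterate (s : Tm) (k d : ℕ) :
    shift (k + d) ((shift 0)^[k] s) = (shift 0)^[k] (shift d s) := by
  induction k with
  | zero => simp
  | succ k ih =>
    rw [Function.iterate_succ_apply', Function.iterate_succ_apply', Nat.add_right_comm,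
      ← shift_shift_of_le _ (Nat.zero_le _), ih]

theorem shift_subst_of_le (s M : Tm) {c k : ℕ} (h : c ≤ k) :
    shift c (subst s k M) = subst s (k + 1) (shift c M) := by
  induction M generalizing c k with
  | var n =>
    rcases Nat.lt_trichotomy n k with hnk | rfl | hnk
    · rcases Nat.lt_or_ge n c with hnc | hnc
      · rw [subst_var_of_lt _ hnk, shift_var_of_lt hnc, subst_var_of_lt _ (by omega)]
      · rw [subst_var_of_lt _ hnk, shift_var_of_le hnc, subst_var_of_lt _ (by omega)]
    · rw [subst_var_self, shift_var_of_le h, subst_var_self, shift_iterate_of_le s h]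
    · rw [subst_var_of_gt _ hnk, shift_var_of_le (by omega), shift_var_of_le (by omega),
        subst_var_of_gt _ (by omega), Nat.sub_add_cancel (by omega), Nat.add_sub_cancel]
  | lam M ih | fix M ih => simp only [subst, shift, ih (Nat.succ_le_succ h)]
  | _ => simp_all [shift, subst]

theorem shift_add_subst (s M : Tm) (k d : ℕ) :
    shift (k + d) (subst s k M) = subst (shift d s) k (shift (k + d + 1) M) := by
  induction M generalizing k with
  | var n =>
    rcases Nat.lt_trichotomy n k with hnk | rfl | hnk
    · rw [subst_var_of_lt _ hnk, shift_var_of_lt (by omega), shift_var_of_lt (by omega),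
        subst_var_of_lt _ hnk]
    · rw [subst_var_self, shift_add_iterate, shift_var_of_lt (by omega), subst_var_self]
    · rcases Nat.lt_or_ge (k + d) n with hn | hn
      · rw [subst_var_of_gt _ hnk, shift_var_of_le (by omega), shift_var_of_le hn,
          subst_var_of_gt _ (by omega), Nat.sub_add_cancel (by omega), Nat.add_sub_cancel]
      · rw [subst_var_of_gt _ hnk, shift_var_of_lt (by omega), shift_var_of_lt (by omega),
          subst_var_of_gt _ hnk]
  | lam M ih | fix M ih =>
    simp only [subst, shift, Nat.add_right_comm k d 1, ih (k + 1)]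
  | _ => simp_all [shift, subst]

theorem subst_shift_self (s M : Tm) (c : ℕ) : subst s c (shift c M) = M := by
  induction M generalizing c with
  | var n =>
    rcases Nat.lt_or_ge n c with h | h
    · rw [shift_var_of_lt h, subst_var_of_lt _ h]
    · rw [shift_var_of_le h, subst_var_of_gt _ (by omega), Nat.add_sub_cancel]
  | _ => simp_all [shift, subst]

theorem subst_add_iterate (s M : Tm) (j d : ℕ) :
    subst s (j + d) ((shift 0)^[j] M) = (shift 0)^[j] (subst s d M) := by
  induction j with
  | zero => simp
  | succ j ih =>
    rw [Function.iterate_succ_apply', Function.iterate_succ_apply', Nat.add_right_comm,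
      ← shift_subst_of_le _ _ (Nat.zero_le _), ih]

theorem subst_iterate_succ_of_le (s M : Tm) {j k : ℕ} (h : j ≤ k) :
    subst s j ((shift 0)^[k + 1] M) = (shift 0)^[k] M := by
  induction j generalizing k with
  | zero => rw [Function.iterate_succ_apply', subst_shift_self]
  | succ j ih =>
    obtain ⟨k, rfl⟩ : ∃ k', k = k' + 1 := ⟨k - 1, by omega⟩
    rw [Function.iterate_succ_apply', ← shift_subst_of_le _ _ (Nat.zero_le j), ih (by omega),
      ← Function.iterate_succ_apply' (shift 0)]

theorem subst_add_subst (s t M : Tm) (j d : ℕ) :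
    subst s (j + d) (subst t j M) = subst (subst s d t) j (subst s (j + d + 1) M) := by
  induction M generalizing j with
  | var n =>
    rcases Nat.lt_trichotomy n j with hnj | rfl | hnj
    · rw [subst_var_of_lt _ hnj, subst_var_of_lt _ (by omega), subst_var_of_lt _ (by omega),
        subst_var_of_lt _ hnj]
    · rw [subst_var_self, subst_add_iterate, subst_var_of_lt _ (by omega), subst_var_self]
    rcases Nat.lt_trichotomy n (j + d + 1) with hn | rfl | hn
    · rw [subst_var_of_gt _ hnj, subst_var_of_lt _ (by omega), subst_var_of_lt _ hn,
        subst_var_of_gt _ hnj]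
    · rw [subst_var_of_gt _ hnj, Nat.add_sub_cancel, subst_var_self, subst_var_self,
        subst_iterate_succ_of_le _ _ (Nat.le_add_right j d)]
    · rw [subst_var_of_gt _ hnj, subst_var_of_gt _ (by omega), subst_var_of_gt _ hn,
        subst_var_of_gt _ (by omega)]
  | lam M ih | fix M ih =>
    simp only [subst, Nat.add_right_comm j d 1, ih (j + 1)]
  | _ => simp_all [subst]

theorem shift_fixn (F : Tm) (c n : ℕ) : shift c (fixn F n) = fixn (shift (c + 1) F) n := by
  induction n with
  | zero => rfl
  | succ n ih => simpa [fixn, ih] using shift_add_subst (fixn F n) F 0 c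

theorem subst_fixn (s F : Tm) (k n : ℕ) : subst s k (fixn F n) = fixn (subst s (k + 1) F) n := by
  induction n with
  | zero => simp [fixn, subst]
  | succ n ih => simpa [fixn, ih] using subst_add_subst s (fixn F n) F 0 k

inductive Approx : ℕ → Tm → Tm → Prop
  | var {k n} : Approx k (.var n) (.var n)
  | num {k n} : Approx k (.num n) (.num n)
  | op {k o M M' N N'} : Approx k M M' → Approx k N N' → Approx k (.op o M N) (.op o M' N')
  | ifz {k M M' P P' Q Q'} : Approx k M M' → Approx k P P' → Approx k Q Q' →
      Approx k (.ifz M P Q) (.ifz M' P' Q')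
  | pair {k M M' N N'} : Approx k M M' → Approx k N N' → Approx k (.pair M N) (.pair M' N')
  | proj {k b M M'} : Approx k M M' → Approx k (.proj b M) (.proj b M')
  | lam {k M M'} : Approx k M M' → Approx k (.lam M) (.lam M')
  | app {k M M' N N'} : Approx k M M' → Approx k N N' → Approx k (.app M N) (.app M' N')
  | fix {k M M'} : Approx k M M' → Approx k (.fix M) (.fix M')
  | czero {k} : Approx k .czero .czero
  | cone {k} : Approx k .cone .cone
  | cadd {k M M' N N'} : Approx k M M' → Approx k N N' → Approx k (.cadd M N) (.cadd M' N')
  | fixn {k n F F'} : Approx k F F' → k ≤ n → Approx k (fixn F n) (.fix F')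

namespace Approx

theorem refl (k : ℕ) (M : Tm) : Approx k M M := by
  induction M <;> constructor <;> assumption

theorem mono {j k : ℕ} {M N : Tm} (h : Approx k M N) (hjk : j ≤ k) : Approx j M N := by
  induction h with
  | fixn _ hn ih => exact .fixn ih (hjk.trans hn)
  | _ => constructor <;> assumption

theorem shift_congr {k : ℕ} {M N : Tm} (h : Approx k M N) (c : ℕ) :
    Approx k (shift c M) (shift c N) := by
  induction h generalizing c with
  | var => simp only [shift]; split_ifs <;> exact .var
  | fixn _ hn ih => rw [shift_fixn]; exact .fixn (ih _) hn
  | _ => constructor <;> apply_assumption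

theorem iterate_shift_congr {k : ℕ} {M N : Tm} (h : Approx k M N) (j : ℕ) :
    Approx k ((shift 0)^[j] M) ((shift 0)^[j] N) := by
  induction j with
  | zero => exact h
  | succ j ih => simpa only [Function.iterate_succ_apply'] using ih.shift_congr 0

theorem subst_congr {k : ℕ} {s s' M N : Tm} (hs : Approx k s s') (h : Approx k M N) (i : ℕ) :
    Approx k (subst s i M) (subst s' i N) := by
  induction h generalizing i with
  | @var n =>
    rcases Nat.lt_trichotomy n i with hni | rfl | hni
    · rw [subst_var_of_lt _ hni, subst_var_of_lt _ hni]; exact .var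
    · rw [subst_var_self, subst_var_self]; exact hs.iterate_shift_congr n
    · rw [subst_var_of_gt _ hni, subst_var_of_gt _ hni]; exact .var
  | fixn _ hn ih => rw [subst_fixn]; exact .fixn (ih _) hn
  | _ => constructor <;> apply_assumption

theorem fill (E : ECtx) {k : ℕ} {M N : Tm} (h : Approx k M N) :
    Approx k (E.fill M) (E.fill N) := by
  induction E with
  | hole => exact h
  | proj b E ih => exact .proj ih
  | app E N ih => exact .app ih (refl k N)

end Approx

theorem CVal.of_approx {V W : Tm} {a k : ℕ} (hV : CVal V a) (h : Approx k W V) : CVal W a := by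
  induction hV generalizing W with
  | zero | one => cases h; constructor
  | add _ _ ih₁ ih₂ => cases h with | cadd h₁ h₂ => exact .add (ih₁ h₁) (ih₂ h₂)

def ApproxEval (k : ℕ) (N V : Tm) : Prop :=
  ∀ j M, Approx (k + j) M N → ∃ W, Evalc M W ∧ Approx j W V

namespace ApproxEval

variable {k₁ k₂ : ℕ}

theorem op {o : Op} {M N : Tm} {a b : ℕ} (hM : ApproxEval k₁ M (.num a))
    (hN : ApproxEval k₂ N (.num b)) :
    ApproxEval (k₁ + k₂) (.op o M N) (.num (o.den a b)) := by
  intro j _ h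
  cases h with | op h₁ h₂ =>
  obtain ⟨_, e₁, a₁⟩ := hM (k₂ + j) _ (h₁.mono (by omega))
  obtain ⟨_, e₂, a₂⟩ := hN j _ (h₂.mono (by omega))
  cases a₁; cases a₂
  exact ⟨_, .op e₁ e₂, .num⟩

theorem ifz_zero {M P Q V : Tm} (hM : ApproxEval k₁ M (.num 0)) (hP : ApproxEval k₂ P V) :
    ApproxEval (k₁ + k₂) (.ifz M P Q) V := by
  intro j _ h
  cases h with | ifz h₁ h₂ _ =>
  obtain ⟨_, e₁, a₁⟩ := hM (k₂ + j) _ (h₁.mono (by omega))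
  obtain ⟨W, e₂, a₂⟩ := hP j _ (h₂.mono (by omega))
  cases a₁
  exact ⟨W, .ifz_zero e₁ e₂, a₂⟩

theorem ifz_succ {M P Q V : Tm} {n : ℕ} (hM : ApproxEval k₁ M (.num (n + 1)))
    (hQ : ApproxEval k₂ Q V) : ApproxEval (k₁ + k₂) (.ifz M P Q) V := by
  intro j _ h
  cases h with | ifz h₁ _ h₂ =>
  obtain ⟨_, e₁, a₁⟩ := hM (k₂ + j) _ (h₁.mono (by omega))
  obtain ⟨W, e₂, a₂⟩ := hQ j _ (h₂.mono (by omega))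
  cases a₁
  exact ⟨W, .ifz_succ e₁ e₂, a₂⟩

theorem proj {b : Bool} {M M₁ M₂ V : Tm} (hM : ApproxEval k₁ M (.pair M₁ M₂))
    (hV : ApproxEval k₂ (cond b M₁ M₂) V) : ApproxEval (k₁ + k₂) (.proj b M) V := by
  intro j _ h
  cases h with | proj h =>
  obtain ⟨_, e₁, a₁⟩ := hM (k₂ + j) _ (h.mono (by omega))
  cases a₁
  obtain ⟨W, e₂, a₂⟩ := hV j (cond b _ _) (by cases b <;> assumption)
  exact ⟨W, .proj e₁ e₂, a₂⟩

theorem app {M N B V : Tm} (hM : ApproxEval k₁ M (.lam B))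
    (hB : ApproxEval k₂ (subst N 0 B) V) : ApproxEval (k₁ + k₂) (.app M N) V := by
  intro j _ h
  cases h with | app h₁ h₂ =>
  obtain ⟨_, e₁, a₁⟩ := hM (k₂ + j) _ (h₁.mono (by omega))
  cases a₁ with | lam a₁ =>
  obtain ⟨W, e₂, a₂⟩ := hB j _ ((h₂.mono (by omega)).subst_congr a₁ 0)
  exact ⟨W, .app e₁ e₂, a₂⟩

theorem cadd {M N V W : Tm} {a b : ℕ} (hM : ApproxEval k₁ M V) (hV : CVal V a)
    (hN : ApproxEval k₂ N W) (hW : CVal W b) :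
    ApproxEval (k₁ + k₂) (.cadd M N) (cnum (a + b)) := by
  intro j _ h
  cases h with | cadd h₁ h₂ =>
  obtain ⟨_, e₁, a₁⟩ := hM (k₂ + j) _ (h₁.mono (by omega))
  obtain ⟨_, e₂, a₂⟩ := hN j _ (h₂.mono (by omega))
  exact ⟨_, .cadd e₁ (hV.of_approx a₁) e₂ (hW.of_approx a₂), .refl _ _⟩

theorem fix {k : ℕ} {F V : Tm} (h : ApproxEval k (subst (.fix F) 0 F) V) :
    ApproxEval (k + 1) (.fix F) V := by
  intro j _ hM
  cases hM with
  | fix hF =>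
    have hF' := hF.mono (by omega : k + j ≤ k + 1 + j)
    obtain ⟨W, e, a⟩ := h j _ ((Approx.fix hF').subst_congr hF' 0)
    exact ⟨W, .fix e, a⟩
  | @fixn n F₀ _ hF hn =>
    -- `fixⁿ⁺¹ x.F₀ = F₀[fixⁿ x.F₀ / x]` approximates `F[fix x.F / x]` at one level less
    obtain ⟨n, rfl⟩ : ∃ m, n = m + 1 := ⟨n - 1, by omega⟩
    have hF' := hF.mono (by omega : k + j ≤ k + 1 + j)
    exact h j _ ((Approx.fixn hF' (by omega)).subst_congr hF' 0)

end ApproxEval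

theorem Evalc.exists_approxEval {N V : Tm} (h : Evalc N V) : ∃ k, ApproxEval k N V := by
  induction h with
  | num | pair | lam | czero | cone =>
    refine ⟨0, fun j M hM => ?_⟩
    rw [Nat.zero_add] at hM
    cases hM
    exact ⟨_, by constructor, by constructor <;> assumption⟩
  | op _ _ ih₁ ih₂ =>
    rcases ih₁, ih₂ with ⟨⟨_, h₁⟩, ⟨_, h₂⟩⟩
    exact ⟨_, h₁.op h₂⟩
  | ifz_zero _ _ ih₁ ih₂ =>
    rcases ih₁, ih₂ with ⟨⟨_, h₁⟩, ⟨_, h₂⟩⟩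
    exact ⟨_, h₁.ifz_zero h₂⟩
  | ifz_succ _ _ ih₁ ih₂ =>
    rcases ih₁, ih₂ with ⟨⟨_, h₁⟩, ⟨_, h₂⟩⟩
    exact ⟨_, h₁.ifz_succ h₂⟩
  | proj _ _ ih₁ ih₂ =>
    rcases ih₁, ih₂ with ⟨⟨_, h₁⟩, ⟨_, h₂⟩⟩
    exact ⟨_, h₁.proj h₂⟩
  | app _ _ ih₁ ih₂ =>
    rcases ih₁, ih₂ with ⟨⟨_, h₁⟩, ⟨_, h₂⟩⟩
    exact ⟨_, h₁.app h₂⟩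
  | cadd _ c₁ _ c₂ ih₁ ih₂ =>
    rcases ih₁, ih₂ with ⟨⟨_, h₁⟩, ⟨_, h₂⟩⟩
    exact ⟨_, h₁.cadd c₁ h₂ c₂⟩
  | fix _ ih =>
    obtain ⟨_, h⟩ := ih
    exact ⟨_, h.fix⟩

/-- compactness of fixed points: if `E[fix x.M]` is bounded
for an eliminative context `E`, then `E[fixⁿ x.M]` is bounded for some `n`. -/
theorem compactness (E : ECtx) (M : Tm)
    (h : Bounded (E.fill (.fix M))) :
    ∃ n : ℕ, Bounded (E.fill (fixn M n)) := by
  obtain ⟨V, hV⟩ := h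
  obtain ⟨k, hk⟩ := hV.exists_approxEval
  obtain ⟨W, hW, -⟩ := hk 0 _ ((Approx.fixn (.refl k M) le_rfl).fill E)
  exact ⟨k, W, hW⟩

end PCFc
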